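/- arXiv:1901.07758 — 2 statements merged into one kernel-verified Lean document; each statement's English description precedes it below -/
import Mathlib

section
/- Let f_θ : ℝ^d → ℝ^m be a fully connected neural network with n_l layers and componentwise tanh activations, defined by y_2(x) = tanh(W_1 x + b_1), y_{i+1} = tanh(W_i y_i + b_i) for i = 2, …, n_l − 1, and f_θ(x) = W_{n_l} y_{n_l} + b_{n_l}. If there is a constant C > 0, C ≠ 1, such that the spectral norm of every weight matrix satisfies ‖W_i‖₂ ≤ C for i = 1, …, n_l, then the second Fréchet derivative of f_θ is uniformly bounded: for every x ∈ ℝ^d, ‖∂²f_θ(x)/∂x²‖₂ ≤ 2 C^{n_l+1} (C^{n_l−1} − 1)/(C − 1), where the left-hand side is the operator norm of the second derivative as a bilinear map. -/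
/-!
For `C²` maps, `D²(g ∘ f) x = D²g (f x) (Df x ·) (Df x ·) + Dg (f x) ∘ D²f x`, so bounds
`‖Df‖ ≤ a`, `‖D²f‖ ≤ B` and `‖Dg‖ ≤ a'`, `‖D²g‖ ≤ B'` give
`‖D(g ∘ f)‖ ≤ a' a` and `‖D²(g ∘ f)‖ ≤ B' a² + a' B`. The componentwise `tanh` has `‖D‖ ≤ 1` and
`‖D²‖ ≤ 2`, since its derivatives are diagonal with entries `1 - tanh²` and
`-2 tanh (1 - tanh²)`. A hidden layer therefore turns the bounds `(a, B)` into
`(C a, 2 C² a² + C B)`; starting from `(1, 0)` this gives `‖D y_k‖ ≤ C^k` and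
`‖D² y_k‖ ≤ 2 C^(k+1) (1 + C + ⋯ + C^(k-1))`, and the affine output layer adds one factor `C`.
-/

/-- Componentwise hyperbolic tangent on Euclidean space. -/
noncomputable def tanhVec {n : ℕ} (v : EuclideanSpace ℝ (Fin n)) :
    EuclideanSpace ℝ (Fin n) :=
  WithLp.toLp 2 (fun i => Real.tanh (v i))

/-- The composition of the first `k` (affine + tanh) hidden layers of a fully
connected network: `nnHidden dims W b 0 = id`, and
`nnHidden dims W b (k+1) x = tanh (W_k (nnHidden dims W b k x) + b_k)`
(tanh applied componentwise).  Thus `nnHidden dims W b k` corresponds to the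
hidden-layer map `y_{k+1}` of the paper. -/
noncomputable def nnHidden (dims : ℕ → ℕ)
    (W : ∀ i : ℕ, EuclideanSpace ℝ (Fin (dims i)) →L[ℝ] EuclideanSpace ℝ (Fin (dims (i + 1))))
    (b : ∀ i : ℕ, EuclideanSpace ℝ (Fin (dims (i + 1)))) :
    (k : ℕ) → EuclideanSpace ℝ (Fin (dims 0)) → EuclideanSpace ℝ (Fin (dims k))
  | 0 => id
  | k + 1 => fun x => tanhVec (W k (nnHidden dims W b k x) + b k)

open ContinuousLinearMap

section SecondOrderBounds

variable {𝕜 : Type*} [NontriviallyNormedField 𝕜]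
  {E F G H : Type*} [NormedAddCommGroup E] [NormedSpace 𝕜 E] [NormedAddCommGroup F]
  [NormedSpace 𝕜 F] [NormedAddCommGroup G] [NormedSpace 𝕜 G] [NormedAddCommGroup H]
  [NormedSpace 𝕜 H]

theorem norm_compL_comp_add_flip_comp_le (c : G →L[𝕜] H) (c' : E →L[𝕜] G →L[𝕜] H)
    (d : F →L[𝕜] G) (d' : E →L[𝕜] F →L[𝕜] G) :
    ‖(compL 𝕜 F G H c).comp d' + ((compL 𝕜 F G H).flip d).comp c'‖ ≤
      ‖c‖ * ‖d'‖ + ‖d‖ * ‖c'‖ := by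
  have hc : ‖compL 𝕜 F G H c‖ ≤ ‖c‖ :=
    (le_opNorm _ _).trans (mul_le_of_le_one_left (norm_nonneg _) (norm_compL_le 𝕜 F G H))
  have hd : ‖(compL 𝕜 F G H).flip d‖ ≤ ‖d‖ :=
    (le_opNorm _ _).trans <| by
      rw [opNorm_flip]; exact mul_le_of_le_one_left (norm_nonneg _) (norm_compL_le 𝕜 F G H)
  calc _ ≤ ‖(compL 𝕜 F G H c).comp d'‖ + ‖((compL 𝕜 F G H).flip d).comp c'‖ :=
        norm_add_le (E := E →L[𝕜] F →L[𝕜] H) _ _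
    _ ≤ ‖compL 𝕜 F G H c‖ * ‖d'‖ + ‖(compL 𝕜 F G H).flip d‖ * ‖c'‖ :=
        add_le_add (opNorm_comp_le _ _) (opNorm_comp_le _ _)
    _ ≤ _ := by gcongr

theorem norm_fderiv_fderiv_comp_le {g : F → G} {f : E → F} (hg : ContDiff 𝕜 2 g)
    (hf : ContDiff 𝕜 2 f) (x : E) :
    ‖fderiv 𝕜 (fderiv 𝕜 (g ∘ f)) x‖ ≤
      ‖fderiv 𝕜 (fderiv 𝕜 g) (f x)‖ * ‖fderiv 𝕜 f x‖ ^ 2 +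
        ‖fderiv 𝕜 g (f x)‖ * ‖fderiv 𝕜 (fderiv 𝕜 f) x‖ := by
  have hg₁ : Differentiable 𝕜 g := hg.differentiable two_ne_zero
  have hf₁ : Differentiable 𝕜 f := hf.differentiable two_ne_zero
  have hg₂ : Differentiable 𝕜 (fderiv 𝕜 g) :=
    (hg.fderiv_right (m := 1) le_rfl).differentiable one_ne_zero
  have hf₂ : Differentiable 𝕜 (fderiv 𝕜 f) :=
    (hf.fderiv_right (m := 1) le_rfl).differentiable one_ne_zero
  have hfderiv : fderiv 𝕜 (g ∘ f) = fun y => (fderiv 𝕜 g (f y)).comp (fderiv 𝕜 f y) :=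
    funext fun y => fderiv_comp y (hg₁ _) (hf₁ y)
  rw [hfderiv, (HasFDerivAt.clm_comp (c := fun y => fderiv 𝕜 g (f y))
    ((hg₂ (f x)).hasFDerivAt.comp x (hf₁ x).hasFDerivAt) (hf₂ x).hasFDerivAt).fderiv]
  refine (norm_compL_comp_add_flip_comp_le _ _ _ _).trans ?_
  have hcomp := opNorm_comp_le (fderiv 𝕜 (fderiv 𝕜 g) (f x)) (fderiv 𝕜 f x)
  calc _ ≤ ‖fderiv 𝕜 g (f x)‖ * ‖fderiv 𝕜 (fderiv 𝕜 f) x‖ +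
        ‖fderiv 𝕜 f x‖ * (‖fderiv 𝕜 (fderiv 𝕜 g) (f x)‖ * ‖fderiv 𝕜 f x‖) := by gcongr
    _ = _ := by ring

variable (𝕜) in
structure HasSecondOrderBounds (f : E → F) (a B : ℝ) : Prop where
  contDiff : ContDiff 𝕜 2 f
  norm_fderiv_le : ∀ x, ‖fderiv 𝕜 f x‖ ≤ a
  norm_fderiv_fderiv_le : ∀ x, ‖fderiv 𝕜 (fderiv 𝕜 f) x‖ ≤ B

namespace HasSecondOrderBounds

variable {g : F → G} {f : E → F} {a a' b B B' : ℝ}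

theorem mono (hf : HasSecondOrderBounds 𝕜 f a B) (ha : a ≤ a') (hB : B ≤ B') :
    HasSecondOrderBounds 𝕜 f a' B' :=
  ⟨hf.contDiff, fun x => (hf.norm_fderiv_le x).trans ha,
    fun x => (hf.norm_fderiv_fderiv_le x).trans hB⟩

theorem nonneg (hf : HasSecondOrderBounds 𝕜 f a B) : 0 ≤ a :=
  (norm_nonneg _).trans (hf.norm_fderiv_le 0)

theorem nonneg_second (hf : HasSecondOrderBounds 𝕜 f a B) : 0 ≤ B :=
  (norm_nonneg (fderiv 𝕜 (fderiv 𝕜 f) 0)).trans (hf.norm_fderiv_fderiv_le 0)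

theorem comp (hg : HasSecondOrderBounds 𝕜 g b B') (hf : HasSecondOrderBounds 𝕜 f a B) :
    HasSecondOrderBounds 𝕜 (g ∘ f) (b * a) (B' * a ^ 2 + b * B) where
  contDiff := hg.contDiff.comp hf.contDiff
  norm_fderiv_le x := by
    rw [fderiv_comp x (hg.contDiff.differentiable two_ne_zero _)
      (hf.contDiff.differentiable two_ne_zero _)]
    exact (opNorm_comp_le _ _).trans
      (mul_le_mul (hg.norm_fderiv_le _) (hf.norm_fderiv_le x) (norm_nonneg _) hg.nonneg)
  norm_fderiv_fderiv_le x := by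
    refine (norm_fderiv_fderiv_comp_le hg.contDiff hf.contDiff x).trans ?_
    have hb := hg.nonneg
    have hB' := hg.nonneg_second
    gcongr
    exacts [hg.norm_fderiv_fderiv_le _, hf.norm_fderiv_le x, hg.norm_fderiv_le _,
      hf.norm_fderiv_fderiv_le x]

end HasSecondOrderBounds

theorem hasSecondOrderBounds_id : HasSecondOrderBounds 𝕜 (id : E → E) 1 0 where
  contDiff := contDiff_id
  norm_fderiv_le _ := by rw [fderiv_id]; exact norm_id_le
  norm_fderiv_fderiv_le _ := by
    rw [show fderiv 𝕜 (id : E → E) = fun _ => ContinuousLinearMap.id 𝕜 E from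
      funext fun _ => fderiv_id, fderiv_const_apply, opNorm_zero]

theorem ContinuousLinearMap.hasSecondOrderBounds_add_const (L : E →L[𝕜] F) (c : F) :
    HasSecondOrderBounds 𝕜 (fun x => L x + c) ‖L‖ 0 where
  contDiff := L.contDiff.add contDiff_const
  norm_fderiv_le _ := by rw [fderiv_add_const, L.fderiv]
  norm_fderiv_fderiv_le _ := by
    rw [show fderiv 𝕜 (fun x => L x + c) = fun _ => L from
      funext fun _ => by rw [fderiv_add_const, L.fderiv], fderiv_const_apply, opNorm_zero]

theorem HasSecondOrderBounds.norm_iteratedFDeriv_two_le {f : E → F} {a B : ℝ}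
    (hf : HasSecondOrderBounds 𝕜 f a B) (x : E) : ‖iteratedFDeriv 𝕜 2 f x‖ ≤ B := by
  rw [← norm_iteratedFDeriv_fderiv, norm_iteratedFDeriv_one]
  exact hf.norm_fderiv_fderiv_le x

end SecondOrderBounds

section Coordinatewise

open Matrix
open scoped Matrix.Norms.L2Operator

variable {ι : Type*} [Fintype ι] {φ : ℝ → ℝ}

noncomputable def coordwise (φ : ℝ → ℝ) (v : EuclideanSpace ℝ ι) : EuclideanSpace ℝ ι :=
  WithLp.toLp 2 fun i => φ (v i)

theorem contDiff_coordwise {n : WithTop ℕ∞} (hφ : ContDiff ℝ n φ) :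
    ContDiff ℝ n (coordwise (ι := ι) φ) :=
  contDiff_piLp' 2 fun _ => hφ.comp (contDiff_piLp_apply 2)

variable [DecidableEq ι]

noncomputable def euclideanDiagonal :
    (ι → ℝ) →L[ℝ] EuclideanSpace ℝ ι →L[ℝ] EuclideanSpace ℝ ι :=
  LinearMap.toContinuousLinearMap
    ((toEuclideanCLM (𝕜 := ℝ) (n := ι)).toAlgEquiv.toLinearMap ∘ₗ diagonalLinearMap ι ℝ ℝ)

@[simp] theorem euclideanDiagonal_apply (a : ι → ℝ) (u : EuclideanSpace ℝ ι) (i : ι) :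
    euclideanDiagonal a u i = a i * u i := by
  simp [euclideanDiagonal, mulVec_diagonal]

theorem norm_euclideanDiagonal (a : ι → ℝ) : ‖euclideanDiagonal a‖ = ‖a‖ :=
  l2_opNorm_diagonal (𝕜 := ℝ) a

theorem norm_euclideanDiagonal_le : ‖(euclideanDiagonal : (ι → ℝ) →L[ℝ] _)‖ ≤ 1 :=
  opNorm_le_bound _ zero_le_one fun a => by rw [norm_euclideanDiagonal, one_mul]

theorem hasFDerivAt_coordwise (hφ : Differentiable ℝ φ) (v : EuclideanSpace ℝ ι) :
    HasFDerivAt (coordwise φ) (euclideanDiagonal fun i => deriv φ (v i)) v := by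
  rw [← (PiLp.continuousLinearEquiv 2 ℝ fun _ : ι => ℝ).comp_hasFDerivAt_iff]
  refine hasFDerivAt_pi'.2 fun i => ?_
  refine ((hφ (v i)).hasDerivAt.comp_hasFDerivAt (h₂ := φ) v
    (PiLp.hasFDerivAt_apply (𝕜 := ℝ) 2 v i)).congr_fderiv ?_
  ext u
  simp

theorem fderiv_coordwise (hφ : Differentiable ℝ φ) :
    fderiv ℝ (coordwise (ι := ι) φ) = fun v => euclideanDiagonal fun i => deriv φ (v i) :=
  funext fun v => (hasFDerivAt_coordwise hφ v).fderiv

theorem hasSecondOrderBounds_coordwise (hφ : ContDiff ℝ 2 φ) {a c : ℝ}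
    (h₁ : ∀ t, |deriv φ t| ≤ a) (h₂ : ∀ t, |deriv (deriv φ) t| ≤ c) :
    HasSecondOrderBounds ℝ (coordwise (ι := ι) φ) a c where
  contDiff := contDiff_coordwise hφ
  norm_fderiv_le v := by
    rw [fderiv_coordwise (hφ.differentiable two_ne_zero), norm_euclideanDiagonal]
    exact pi_norm_le_iff_of_nonneg ((abs_nonneg _).trans (h₁ 0)) |>.2 fun i => h₁ (v i)
  norm_fderiv_fderiv_le v := by
    have hφ' : Differentiable ℝ (deriv φ) := by
      rw [show (2 : WithTop ℕ∞) = 1 + 1 from rfl, contDiff_succ_iff_deriv] at hφ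
      exact hφ.2.2.differentiable one_ne_zero
    have hpi : HasFDerivAt (fun w : EuclideanSpace ℝ ι => fun i => deriv φ (w i))
        (pi fun i => deriv (deriv φ) (v i) • PiLp.proj 2 (fun _ => ℝ) i) v :=
      hasFDerivAt_pi.2 fun i =>
        (hφ' (v i)).hasDerivAt.comp_hasFDerivAt (h₂ := deriv φ) v
          (PiLp.hasFDerivAt_apply (𝕜 := ℝ) 2 v i)
    have hproj (i : ι) : ‖PiLp.proj (𝕜 := ℝ) 2 (fun _ : ι => ℝ) i‖ ≤ 1 := by
      refine opNorm_le_bound _ zero_le_one fun u => ?_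
      simpa using PiLp.norm_apply_le u i
    have hD : HasFDerivAt (fun w => euclideanDiagonal fun i => deriv φ (w i))
        (euclideanDiagonal.comp
          (pi fun i => deriv (deriv φ) (v i) • PiLp.proj 2 (fun _ => ℝ) i)) v :=
      (euclideanDiagonal (ι := ι)).hasFDerivAt.comp v hpi
    rw [fderiv_coordwise (hφ.differentiable two_ne_zero), hD.fderiv]
    refine (opNorm_comp_le _ _).trans <|
      (mul_le_of_le_one_left (norm_nonneg _) norm_euclideanDiagonal_le).trans ?_
    have hc : 0 ≤ c := (abs_nonneg _).trans (h₂ 0)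
    refine norm_pi_le_of_le (fun i => (opNorm_smul_le _ _).trans ?_) hc
    rw [Real.norm_eq_abs, ← mul_one c]
    exact mul_le_mul (h₂ _) (hproj i) (norm_nonneg _) hc

end Coordinatewise

namespace Real

theorem hasDerivAt_tanh (x : ℝ) : HasDerivAt tanh (1 - tanh x ^ 2) x := by
  have h := (hasDerivAt_sinh x).div (hasDerivAt_cosh x) (cosh_pos x).ne'
  rw [show tanh = fun y => sinh y / cosh y from funext tanh_eq_sinh_div_cosh]
  refine h.congr_deriv ?_
  rw [div_pow, one_sub_div (pow_ne_zero 2 (cosh_pos x).ne')]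
  ring

theorem contDiff_tanh {n : WithTop ℕ∞} : ContDiff ℝ n tanh := by
  rw [show tanh = fun y => sinh y / cosh y from funext tanh_eq_sinh_div_cosh]
  exact contDiff_sinh.div contDiff_cosh fun x => (cosh_pos x).ne'

theorem deriv_tanh : deriv tanh = fun x => 1 - tanh x ^ 2 :=
  funext fun x => (hasDerivAt_tanh x).deriv

theorem deriv_deriv_tanh : deriv (deriv tanh) = fun x => -(2 * tanh x * (1 - tanh x ^ 2)) :=
  funext fun x => by
    rw [deriv_tanh]
    refine (((hasDerivAt_tanh x).pow 2).const_sub 1).deriv.trans ?_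
    ring

end Real

open Real in
theorem hasSecondOrderBounds_tanhVec (n : ℕ) :
    HasSecondOrderBounds ℝ (tanhVec (n := n)) 1 2 := by
  refine hasSecondOrderBounds_coordwise contDiff_tanh (fun t => ?_) (fun t => ?_)
  · rw [deriv_tanh, abs_le]
    constructor <;> nlinarith [tanh_sq_lt_one t, sq_nonneg (tanh t)]
  · rw [deriv_deriv_tanh, abs_le]
    constructor <;> nlinarith [neg_one_lt_tanh t, tanh_lt_one t, tanh_sq_lt_one t]

section Network

variable (dims : ℕ → ℕ)
  (W : ∀ i : ℕ, EuclideanSpace ℝ (Fin (dims i)) →L[ℝ] EuclideanSpace ℝ (Fin (dims (i + 1))))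
  (b : ∀ i : ℕ, EuclideanSpace ℝ (Fin (dims (i + 1))))

theorem nnHidden_succ (k : ℕ) :
    nnHidden dims W b (k + 1) = tanhVec ∘ (fun z => W k z + b k) ∘ nnHidden dims W b k :=
  rfl

theorem hasSecondOrderBounds_nnHidden {C : ℝ} (hC : 0 ≤ C) (k : ℕ) (hW : ∀ i < k, ‖W i‖ ≤ C) :
    HasSecondOrderBounds ℝ (nnHidden dims W b k) (C ^ k)
      (2 * C ^ (k + 1) * ∑ j ∈ Finset.range k, C ^ j) := by
  induction k with
  | zero => simpa [nnHidden] using hasSecondOrderBounds_id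
  | succ k ih =>
    have hWk := hW k k.lt_succ_self
    rw [nnHidden_succ]
    have hlayer := ((W k).hasSecondOrderBounds_add_const (b k)).comp
      (ih fun i hi => hW i (hi.trans k.lt_succ_self))
    refine ((hasSecondOrderBounds_tanhVec _).comp hlayer).mono ?_ ?_
    · rw [one_mul, pow_succ']
      gcongr
    · calc
        _ ≤ 2 * (C * C ^ k) ^ 2 + C * (2 * C ^ (k + 1) * ∑ j ∈ Finset.range k, C ^ j) := by
            rw [zero_mul, zero_add, one_mul]
            gcongr
        _ = _ := by rw [Finset.sum_range_succ]; ring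

end Network

/-- If every weight matrix of a fully connected tanh network with `nl` layers
has spectral norm at most `C` (with `C > 0`, `C ≠ 1`), then the second Fréchet
derivative of the network `f_θ(x) = W_{nl} y_{nl}(x) + b_{nl}` satisfies
`‖∂²f_θ(x)/∂x²‖₂ ≤ 2 C^{nl+1} (C^{nl-1} − 1)/(C − 1)` for every input `x`,
where the norm is the operator norm of the second derivative as a bilinear map. -/
theorem nn_second_derivative_bound
    (nl : ℕ) (hnl : 1 ≤ nl) (dims : ℕ → ℕ)
    (W : ∀ i : ℕ, EuclideanSpace ℝ (Fin (dims i)) →L[ℝ] EuclideanSpace ℝ (Fin (dims (i + 1))))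
    (b : ∀ i : ℕ, EuclideanSpace ℝ (Fin (dims (i + 1))))
    (C : ℝ) (hC : 0 < C) (hC1 : C ≠ 1)
    (hW : ∀ i < nl, ‖W i‖ ≤ C) :
    ∀ x : EuclideanSpace ℝ (Fin (dims 0)),
      ‖iteratedFDeriv ℝ 2 (fun y => W (nl - 1) (nnHidden dims W b (nl - 1) y) + b (nl - 1)) x‖
        ≤ 2 * C ^ (nl + 1) * ((C ^ (nl - 1) - 1) / (C - 1)) := by
  obtain ⟨m, rfl⟩ : ∃ m, nl = m + 1 := ⟨nl - 1, by omega⟩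
  intro x
  simp only [Nat.add_sub_cancel]
  have hf := ((W m).hasSecondOrderBounds_add_const (b m)).comp
    (hasSecondOrderBounds_nnHidden dims W b hC.le m fun i hi => hW i (by omega))
  refine (hf.norm_iteratedFDeriv_two_le x).trans ?_
  rw [← geom_sum_eq hC1, zero_mul, zero_add]
  calc _ ≤ C * (2 * C ^ (m + 1) * ∑ j ∈ Finset.range m, C ^ j) := by
        gcongr
        exact hW m m.lt_succ_self
    _ = _ := by ring
end

section
/- Consider the 1D diffusion equation u_t = f(x) u_{xx} on [−1,1] × [t₀, t₁], uniform grid x_i with spacing h, t₁ = t₀ + Δt, exact values u_{0i} = u(x_i, t₀), u_{1i} = u(x_i, t₁), and observations U_{ki} = u_{ki} + W_{ki} with |W_{ki}| ≤ ε_o. Assume: u ∈ C⁴([−1,1] × [t₀, t₁]) with u_{xx}(x,t) ≥ δ₂ > 0 and |u_{xxxx}(x,t)| ≤ δ₄ on [−1,1] × [t₀, t₁]; h < √(6δ₂/δ₄); |f_θ(x)| ≤ F₀ on [−1,1]; the consistency residual of the exact solution at interior grid point x_i is bounded by ε_c, i.e. | (u_{1i} − u_{0i})/Δt − f(x_i)(u_{1,i+1}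 + u_{1,i−1} − 2u_{1i})/(2h²) − f(x_i)(u_{0,i+1} + u_{0,i−1} − 2u_{0i})/(2h²) | ≤ ε_c; and the optimization residual at x_i is bounded by ε_opt, i.e. | (U_{1i} − U_{0i})/Δt − f_θ(x_i)(U_{1,i+1} + U_{1,i−1} − 2U_{1i})/(2h²) − f_θ(x_i)(U_{0,i+1} + U_{0,i−1} − 2U_{0i})/(2h²) | ≤ ε_opt. Then at every interior grid point x_i, |f(x_i) − f_θ(x_i)| ≤ (2/δ₂) [ ε_opt + ε_c + 2(1/Δt + 2F₀/h²) ε_o ]. -/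
/-!
Subtracting the consistency residual of the exact solution from the optimization residual of
`f_θ` at `x_i` leaves `(f - f_θ)(x_i)` times the averaged second difference
`(D₀ + D₁) / (2h²)`, plus noise terms of size at most `2ε_o/Δt` and `4F₀ε_o/h²`.
Each slice `u(·, t) - δ₂ x² / 2` is convex, so its midpoint inequality gives `D_k ≥ δ₂ h²`;
hence the averaged second difference is at least `δ₂`, and dividing by it yields half the
stated bound.
-/

open Set

theorem convexOn_sub_half_mul_sq {D : Set ℝ} (hD : Convex ℝ D) (hDu : UniqueDiffOn ℝ D)
    {g : ℝ → ℝ} {δ : ℝ} (hg : ContDiffOn ℝ 2 g D)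
    (hg₂ : ∀ x ∈ interior D, δ ≤ iteratedDerivWithin 2 g D x) :
    ConvexOn ℝ D fun x => g x - δ / 2 * x ^ 2 := by
  have hg' : DifferentiableOn ℝ (derivWithin g D) D :=
    (hg.derivWithin hDu (m := 1) le_rfl).differentiableOn one_ne_zero
  refine convexOn_of_hasDerivWithinAt2_nonneg hD (f' := fun x => derivWithin g D x - δ * x)
    (f'' := fun x => iteratedDerivWithin 2 g D x - δ) (hg.continuousOn.sub (by fun_prop))
    (fun x hx => ?_) (fun x hx => ?_) (fun x hx => sub_nonneg.2 (hg₂ x hx))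
  · have hgx := (hg.differentiableOn (by norm_num) x (interior_subset hx)).hasDerivWithinAt
    exact ((hgx.mono interior_subset).fun_sub
      ((hasDerivAt_pow 2 x).const_mul (δ / 2)).hasDerivWithinAt).congr_deriv (by norm_num; ring)
  · rw [iteratedDerivWithin_eq_iterate]
    exact ((hg' x (interior_subset hx)).hasDerivWithinAt.mono interior_subset).sub
      ((hasDerivAt_id x).const_mul δ).hasDerivWithinAt |>.congr_deriv (by simp)

theorem ConvexOn.mul_sq_le_add_sub_two_mul {D : Set ℝ} {g : ℝ → ℝ} {δ X h : ℝ}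
    (hconv : ConvexOn ℝ D fun x => g x - δ / 2 * x ^ 2) (hm : X - h ∈ D) (hp : X + h ∈ D) :
    δ * h ^ 2 ≤ g (X + h) + g (X - h) - 2 * g X := by
  have hmid := hconv.2 hm hp (by norm_num : (0 : ℝ) ≤ 1 / 2) (by norm_num : (0 : ℝ) ≤ 1 / 2)
    (by norm_num)
  simp only [smul_eq_mul] at hmid
  rw [show (1 / 2 : ℝ) * (X - h) + 1 / 2 * (X + h) = X by ring] at hmid
  nlinarith

def secondDiff (v : ℕ → ℝ) (i : ℕ) : ℝ := v (i + 1) + v (i - 1) - 2 * v i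

noncomputable def cnResidual (Δt h c : ℝ) (v₀ v₁ : ℕ → ℝ) (i : ℕ) : ℝ :=
  (v₁ i - v₀ i) / Δt - c * secondDiff v₁ i / (2 * h ^ 2) - c * secondDiff v₀ i / (2 * h ^ 2)

theorem abs_secondDiff_le {v : ℕ → ℝ} {i : ℕ} {ε : ℝ}
    (hv : ∀ j, i - 1 ≤ j → j ≤ i + 1 → |v j| ≤ ε) : |secondDiff v i| ≤ 4 * ε := by
  have hp := hv (i + 1) (by omega) le_rfl
  have hm := hv (i - 1) le_rfl (by omega)
  have h0 := hv i (by omega) (by omega)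
  calc |secondDiff v i| ≤ |v (i + 1)| + |v (i - 1)| + 2 * |v i| := by
        unfold secondDiff
        have := abs_sub (v (i + 1) + v (i - 1)) (2 * v i)
        rw [abs_mul, abs_two] at this
        linarith [abs_add_le (v (i + 1)) (v (i - 1))]
    _ ≤ 4 * ε := by linarith

theorem cnResidual_sub_cnResidual (Δt h a b : ℝ) (v₀ v₁ V₀ V₁ : ℕ → ℝ) (i : ℕ) :
    cnResidual Δt h b V₀ V₁ i - cnResidual Δt h a v₀ v₁ i
      = (a - b) * ((secondDiff v₁ i + secondDiff v₀ i) / (2 * h ^ 2))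
        + ((V₁ - v₁) i - (V₀ - v₀) i) / Δt
        - b * (secondDiff (V₁ - v₁) i + secondDiff (V₀ - v₀) i) / (2 * h ^ 2) := by
  simp only [cnResidual, secondDiff, Pi.sub_apply]
  ring

theorem abs_sub_le_of_abs_cnResidual_le {Δt h a b δ F₀ ε ε₁ ε₂ : ℝ} {v₀ v₁ V₀ V₁ : ℕ → ℝ}
    {i : ℕ} (hΔt : 0 < Δt) (hh : 0 < h) (hδ : 0 < δ)
    (hv₀ : δ * h ^ 2 ≤ secondDiff v₀ i) (hv₁ : δ * h ^ 2 ≤ secondDiff v₁ i) (hb : |b| ≤ F₀)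
    (hV₀ : ∀ j, i - 1 ≤ j → j ≤ i + 1 → |(V₀ - v₀) j| ≤ ε)
    (hV₁ : ∀ j, i - 1 ≤ j → j ≤ i + 1 → |(V₁ - v₁) j| ≤ ε)
    (hres : |cnResidual Δt h a v₀ v₁ i| ≤ ε₁) (hres' : |cnResidual Δt h b V₀ V₁ i| ≤ ε₂) :
    |a - b| ≤ (ε₂ + ε₁ + 2 * ε / Δt + 4 * F₀ * ε / h ^ 2) / δ := by
  set S := (secondDiff v₁ i + secondDiff v₀ i) / (2 * h ^ 2)
  have hS : δ ≤ S := by rw [le_div_iff₀ (by positivity)]; linarith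
  have htime : |((V₁ - v₁) i - (V₀ - v₀) i) / Δt| ≤ 2 * ε / Δt := by
    rw [abs_div, abs_of_pos hΔt]
    gcongr
    linarith [hV₁ i (by omega) (by omega),
      hV₀ i (by omega) (by omega), abs_sub ((V₁ - v₁) i) ((V₀ - v₀) i)]
  have hspace : |b * (secondDiff (V₁ - v₁) i + secondDiff (V₀ - v₀) i) / (2 * h ^ 2)|
      ≤ 4 * F₀ * ε / h ^ 2 := by
    have he : |secondDiff (V₁ - v₁) i + secondDiff (V₀ - v₀) i| ≤ 8 * ε := by
      linarith [abs_add_le (secondDiff (V₁ - v₁) i) (secondDiff (V₀ - v₀) i),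
        abs_secondDiff_le hV₁, abs_secondDiff_le hV₀]
    rw [abs_div, abs_mul, abs_of_pos (by positivity : (0 : ℝ) < 2 * h ^ 2),
      div_le_div_iff₀ (by positivity) (by positivity)]
    nlinarith [mul_le_mul hb he (abs_nonneg _) ((abs_nonneg b).trans hb)]
  have hkey := cnResidual_sub_cnResidual Δt h a b v₀ v₁ V₀ V₁ i
  rw [le_div_iff₀ hδ]
  calc |a - b| * δ ≤ |a - b| * S := by gcongr
    _ = |(a - b) * S| := by rw [abs_mul, abs_of_pos (hδ.trans_le hS)]
    _ ≤ ε₂ + ε₁ + 2 * ε / Δt + 4 * F₀ * ε / h ^ 2 := by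
      rw [abs_le] at hres hres' htime hspace ⊢
      constructor <;> linarith [hres.1, hres.2, hres'.1, hres'.2, htime.1, htime.2,
        hspace.1, hspace.2]

theorem uniform_grid_mem_Icc {x : ℕ → ℝ} {a b h : ℝ} {N j : ℕ} (hh : 0 ≤ h)
    (hx : ∀ i, x i = a + i * h) (hN : x N = b) (hj : j ≤ N) : x j ∈ Icc a b := by
  rw [hx] at hN ⊢
  have hjN : (j : ℝ) * h ≤ N * h := mul_le_mul_of_nonneg_right (by exact_mod_cast hj) hh
  constructor <;> nlinarith [mul_nonneg (Nat.cast_nonneg j : (0 : ℝ) ≤ j) hh]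

theorem mul_sq_le_secondDiff_of_uniform_grid {x : ℕ → ℝ} {g : ℝ → ℝ} {a b h δ : ℝ} {N i : ℕ}
    (hh : 0 < h) (hx : ∀ i, x i = a + i * h) (hN : x N = b) (hi₁ : 1 ≤ i) (hi₂ : i + 1 ≤ N)
    (hg : ContDiffOn ℝ 2 g (Icc a b))
    (hg₂ : ∀ X ∈ Icc a b, δ ≤ iteratedDerivWithin 2 g (Icc a b) X) :
    δ * h ^ 2 ≤ secondDiff (fun j => g (x j)) i := by
  have hxp : x (i + 1) = x i + h := by rw [hx, hx]; push_cast; ring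
  have hxm : x (i - 1) = x i - h := by rw [hx, hx, Nat.cast_sub hi₁]; push_cast; ring
  have hab : a < b := by
    have hN₁ : (1 : ℝ) ≤ N := by exact_mod_cast (by omega : 1 ≤ N)
    rw [hx] at hN
    nlinarith
  have hconv := convexOn_sub_half_mul_sq (convex_Icc a b) (uniqueDiffOn_Icc hab) hg
    fun X hX => hg₂ X (interior_subset hX)
  have := hconv.mul_sq_le_add_sub_two_mul
    (hxm ▸ uniform_grid_mem_Icc hh.le hx hN (by omega))
    (hxp ▸ uniform_grid_mem_Icc hh.le hx hN hi₂)
  rwa [← hxp, ← hxm] at this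

theorem diffusion_inverse_grid_point_error_general
    (t₀ Δt h ε_o ε_c ε_opt δ₂ F₀ : ℝ)
    (hΔt : 0 < Δt) (hh : 0 < h)
    (n : ℕ)
    (x : ℕ → ℝ) (hx : ∀ i, x i = -1 + i * h) (hgrid : x (n - 1) = 1)
    (u : ℝ → ℝ → ℝ) (f fθ : ℝ → ℝ)
    (W₀ W₁ U₀ U₁ : ℕ → ℝ)
    (hu : ContDiffOn ℝ 4 (fun p : ℝ × ℝ => u p.1 p.2)
      (Set.Icc (-1 : ℝ) 1 ×ˢ Set.Icc t₀ (t₀ + Δt)))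
    (hδ₂ : 0 < δ₂)
    (huxx : ∀ t ∈ Set.Icc t₀ (t₀ + Δt), ∀ X ∈ Set.Icc (-1 : ℝ) 1,
      δ₂ ≤ iteratedDerivWithin 2 (fun y => u y t) (Set.Icc (-1 : ℝ) 1) X)
    (hF₀ : ∀ X ∈ Set.Icc (-1 : ℝ) 1, |fθ X| ≤ F₀)
    (hW₀ : ∀ i < n, |W₀ i| ≤ ε_o) (hW₁ : ∀ i < n, |W₁ i| ≤ ε_o)
    (hU₀ : ∀ i < n, U₀ i = u (x i) t₀ + W₀ i)
    (hU₁ : ∀ i < n, U₁ i = u (x i) (t₀ + Δt) + W₁ i)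
    (hcons : ∀ i, 1 ≤ i → i ≤ n - 2 →
      |(u (x i) (t₀ + Δt) - u (x i) t₀) / Δt
        - f (x i) * (u (x (i + 1)) (t₀ + Δt) + u (x (i - 1)) (t₀ + Δt)
            - 2 * u (x i) (t₀ + Δt)) / (2 * h ^ 2)
        - f (x i) * (u (x (i + 1)) t₀ + u (x (i - 1)) t₀
            - 2 * u (x i) t₀) / (2 * h ^ 2)| ≤ ε_c)
    (hopt : ∀ i, 1 ≤ i → i ≤ n - 2 →
      |(U₁ i - U₀ i) / Δt
        - fθ (x i) * (U₁ (i + 1) + U₁ (i - 1) - 2 * U₁ i) / (2 * h ^ 2)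
        - fθ (x i) * (U₀ (i + 1) + U₀ (i - 1) - 2 * U₀ i) / (2 * h ^ 2)| ≤ ε_opt) :
    ∀ i, 1 ≤ i → i ≤ n - 2 →
      |f (x i) - fθ (x i)|
        ≤ 2 / δ₂ * (ε_opt + ε_c + 2 * (1 / Δt + 2 * F₀ / h ^ 2) * ε_o) := by
  intro i hi₁ hi₂
  have hslice : ∀ t ∈ Icc t₀ (t₀ + Δt), δ₂ * h ^ 2 ≤ secondDiff (fun j => u (x j) t) i :=
    fun t ht => mul_sq_le_secondDiff_of_uniform_grid hh hx hgrid hi₁ (by omega)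
      ((hu.comp (contDiffOn_id.prodMk contDiffOn_const) fun _ hy => ⟨hy, ht⟩).of_le
        (by norm_num)) (huxx t ht)
  have hnoise : ∀ (U W : ℕ → ℝ) (t : ℝ), (∀ j < n, |W j| ≤ ε_o) →
      (∀ j < n, U j = u (x j) t + W j) →
      ∀ j, i - 1 ≤ j → j ≤ i + 1 → |(U - fun j => u (x j) t) j| ≤ ε_o :=
    fun U W t hW hU j _ hj => by
      rw [Pi.sub_apply, hU j (by omega), add_sub_cancel_left]; exact hW j (by omega)
  have hbound := abs_sub_le_of_abs_cnResidual_le hΔt hh hδ₂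
    (hslice t₀ (left_mem_Icc.2 (by linarith))) (hslice (t₀ + Δt) (right_mem_Icc.2 (by linarith)))
    (hF₀ _ (uniform_grid_mem_Icc hh.le hx hgrid (by omega)))
    (hnoise U₀ W₀ t₀ hW₀ hU₀) (hnoise U₁ W₁ (t₀ + Δt) hW₁ hU₁)
    (hcons i hi₁ hi₂) (hopt i hi₁ hi₂)
  calc |f (x i) - fθ (x i)| ≤ (ε_opt + ε_c + 2 * ε_o / Δt + 4 * F₀ * ε_o / h ^ 2) / δ₂ := hbound
    _ ≤ 2 * ((ε_opt + ε_c + 2 * ε_o / Δt + 4 * F₀ * ε_o / h ^ 2) / δ₂) :=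
      le_mul_of_one_le_left ((abs_nonneg _).trans hbound) one_le_two
    _ = 2 / δ₂ * (ε_opt + ε_c + 2 * (1 / Δt + 2 * F₀ / h ^ 2) * ε_o) := by ring

/-- Error bound at the interior grid points for the calibrated conductivity in
the 1D diffusion problem `u_t = f(x) u_{xx}` on `[−1,1] × [t₀, t₀+Δt]`:
on the uniform grid `x_i = −1 + i h` (0-indexed, `x_{n−1} = 1`), with noisy
observations `U_{ki} = u(x_i, t_k) + W_{ki}`, `|W_{ki}| ≤ ε_o`, exact solution
`u ∈ C⁴` with `u_{xx} ≥ δ₂ > 0` and `|u_{xxxx}| ≤ δ₄`, grid satisfying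
`h < √(6δ₂/δ₄)`, `|f_θ| ≤ F₀`, Crank–Nicolson consistency residual of the exact
solution bounded by `ε_c` and optimization residual of `f_θ` bounded by `ε_opt`
at interior grid points, one has
`|f(x_i) − f_θ(x_i)| ≤ (2/δ₂)[ε_opt + ε_c + 2(1/Δt + 2F₀/h²)ε_o]` at every
interior grid point. -/
theorem diffusion_inverse_grid_point_error
    (t₀ Δt h ε_o ε_c ε_opt δ₂ δ₄ F₀ : ℝ)
    (hΔt : 0 < Δt) (hh : 0 < h)
    (n : ℕ) (hn : 3 ≤ n)
    (x : ℕ → ℝ) (hx : ∀ i, x i = -1 + i * h) (hgrid : x (n - 1) = 1)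
    (u : ℝ → ℝ → ℝ) (f fθ : ℝ → ℝ)
    (W₀ W₁ U₀ U₁ : ℕ → ℝ)
    (hu : ContDiffOn ℝ 4 (fun p : ℝ × ℝ => u p.1 p.2)
      (Set.Icc (-1 : ℝ) 1 ×ˢ Set.Icc t₀ (t₀ + Δt)))
    (hδ₂ : 0 < δ₂)
    (huxx : ∀ t ∈ Set.Icc t₀ (t₀ + Δt), ∀ X ∈ Set.Icc (-1 : ℝ) 1,
      δ₂ ≤ iteratedDerivWithin 2 (fun y => u y t) (Set.Icc (-1 : ℝ) 1) X)
    (huxxxx : ∀ t ∈ Set.Icc t₀ (t₀ + Δt), ∀ X ∈ Set.Icc (-1 : ℝ) 1,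
      |iteratedDerivWithin 4 (fun y => u y t) (Set.Icc (-1 : ℝ) 1) X| ≤ δ₄)
    (hsmall : h < Real.sqrt (6 * δ₂ / δ₄))
    (hF₀ : ∀ X ∈ Set.Icc (-1 : ℝ) 1, |fθ X| ≤ F₀)
    (hW₀ : ∀ i < n, |W₀ i| ≤ ε_o) (hW₁ : ∀ i < n, |W₁ i| ≤ ε_o)
    (hU₀ : ∀ i < n, U₀ i = u (x i) t₀ + W₀ i)
    (hU₁ : ∀ i < n, U₁ i = u (x i) (t₀ + Δt) + W₁ i)
    (hcons : ∀ i, 1 ≤ i → i ≤ n - 2 →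
      |(u (x i) (t₀ + Δt) - u (x i) t₀) / Δt
        - f (x i) * (u (x (i + 1)) (t₀ + Δt) + u (x (i - 1)) (t₀ + Δt)
            - 2 * u (x i) (t₀ + Δt)) / (2 * h ^ 2)
        - f (x i) * (u (x (i + 1)) t₀ + u (x (i - 1)) t₀
            - 2 * u (x i) t₀) / (2 * h ^ 2)| ≤ ε_c)
    (hopt : ∀ i, 1 ≤ i → i ≤ n - 2 →
      |(U₁ i - U₀ i) / Δt
        - fθ (x i) * (U₁ (i + 1) + U₁ (i - 1) - 2 * U₁ i) / (2 * h ^ 2)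
        - fθ (x i) * (U₀ (i + 1) + U₀ (i - 1) - 2 * U₀ i) / (2 * h ^ 2)| ≤ ε_opt) :
    ∀ i, 1 ≤ i → i ≤ n - 2 →
      |f (x i) - fθ (x i)|
        ≤ 2 / δ₂ * (ε_opt + ε_c + 2 * (1 / Δt + 2 * F₀ / h ^ 2) * ε_o) :=
  diffusion_inverse_grid_point_error_general t₀ Δt h ε_o ε_c ε_opt δ₂ F₀ hΔt hh n x hx hgrid u f fθ
    W₀ W₁ U₀ U₁ hu hδ₂ huxx hF₀ hW₀ hW₁ hU₀ hU₁ hcons hopt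
end
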